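/- Let R : ℝ → SO(3) be differentiable with R' = R ω̂_B for a continuous ω_B : ℝ → ℝ³, where ω̂ v = ω × v. Fix L ∈ ℝ³ \ {0} and suppose Π(t) := R(t)⁻¹ L satisfies Π(t₁) = Π(t₂). Then there exists a unique θ_M ∈ ℝ/2πℤ such that R(t₂) = exp(θ_M L̂/‖L‖) R(t₁). -/

import Mathlib

open Matrix Real

/-- The standard Lie algebra isomorphism `ˆ : ℝ³ → so(3)`, `ω̂ v = ω × v`. -/
def hatMap (w : Fin 3 → ℝ) : Matrix (Fin 3) (Fin 3) ℝ :=
  !![0, -w 2, w 1; w 2, 0, -w 0; -w 1, w 0, 0]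

lemma hatMap_mulVec (a v : Fin 3 → ℝ) : hatMap a *ᵥ v = a ⨯₃ v := by
  funext i
  fin_cases i <;>
    simp [hatMap, crossProduct, Matrix.mulVec, dotProduct, Fin.sum_univ_three] <;> ring

lemma hatMap_smul (r : ℝ) (a : Fin 3 → ℝ) : hatMap (r • a) = r • hatMap a := by
  ext i j
  fin_cases i <;> fin_cases j <;> simp [hatMap]

lemma hatMap_cube (a : Fin 3 → ℝ) :
    hatMap a * hatMap a * hatMap a = -((a ⬝ᵥ a) • hatMap a) := by
  ext i j
  fin_cases i <;> fin_cases j <;>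
    simp [hatMap, Matrix.mul_apply, dotProduct, Fin.sum_univ_three] <;> ring

lemma cross_cross_eq (a b c : Fin 3 → ℝ) :
    a ⨯₃ (b ⨯₃ c) = (a ⬝ᵥ c) • b - (a ⬝ᵥ b) • c := by
  funext i
  fin_cases i <;>
    simp [crossProduct, dotProduct, Fin.sum_univ_three] <;> ring

lemma cross_bilin (u w : Fin 3 → ℝ) (c s c' s' : ℝ) :
    (c • u + s • w) ⨯₃ (c' • u + s' • w) = (c * s' - s * c') • (u ⨯₃ w) := by
  funext i
  fin_cases i <;>
    simp [crossProduct, dotProduct, Fin.sum_univ_three] <;> ring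

lemma exists_perp (n : Fin 3 → ℝ) (hn : n ⬝ᵥ n = 1) :
    ∃ u : Fin 3 → ℝ, u ⬝ᵥ u = 1 ∧ n ⬝ᵥ u = 0 := by
  have key : ∃ v : Fin 3 → ℝ, v ≠ 0 ∧ n ⬝ᵥ v = 0 := by
    by_cases h0 : n ⨯₃ ![1,0,0] = 0
    · refine ⟨n ⨯₃ ![0,1,0], ?_, dot_self_cross _ _⟩
      intro h1
      have e0 := congrFun h0 1
      have e1 := congrFun h0 2
      have e2 := congrFun h1 0
      have e3 := congrFun h1 2
      simp [crossProduct] at e0 e1 e2 e3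
      rw [dotProduct, Fin.sum_univ_three] at hn
      simp [e0, e1, e2, e3] at hn
    · exact ⟨n ⨯₃ ![1,0,0], h0, dot_self_cross _ _⟩
  obtain ⟨v, hv0, hnv⟩ := key
  have hvv : 0 < v ⬝ᵥ v := by
    have h1 : v ⬝ᵥ v ≠ 0 := fun h => hv0 (dotProduct_self_eq_zero.mp h)
    have h2 : 0 ≤ v ⬝ᵥ v := Finset.sum_nonneg fun i _ => mul_self_nonneg _
    exact lt_of_le_of_ne h2 (Ne.symm h1)
  set r := Real.sqrt (v ⬝ᵥ v) with hr
  have hrpos : 0 < r := Real.sqrt_pos.mpr hvv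
  refine ⟨r⁻¹ • v, ?_, ?_⟩
  · rw [smul_dotProduct, dotProduct_smul, smul_eq_mul, smul_eq_mul]
    have hrr : r * r = v ⬝ᵥ v := Real.mul_self_sqrt hvv.le
    field_simp
    simp only [dotProduct, Fin.sum_univ_three] at hrr ⊢
    linarith
  · rw [dotProduct_smul, hnv, smul_eq_mul, mul_zero]

lemma exists_cos_sin (c s : ℝ) (h : c^2 + s^2 = 1) :
    ∃ θ, θ ∈ Set.Ico 0 (2*π) ∧ Real.cos θ = c ∧ Real.sin θ = s := by
  have hc1 : -1 ≤ c := by nlinarith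
  have hc2 : c ≤ 1 := by nlinarith
  have hs2 : 1 - c^2 = s^2 := by linarith
  rcases le_or_gt 0 s with hs | hs
  · refine ⟨Real.arccos c, ⟨Real.arccos_nonneg c, lt_of_le_of_lt (Real.arccos_le_pi c) ?_⟩,
      Real.cos_arccos hc1 hc2, ?_⟩
    · nlinarith [Real.pi_pos]
    · rw [Real.sin_arccos, hs2, Real.sqrt_sq_eq_abs, abs_of_nonneg hs]
  · have hclt : c < 1 := by
      rcases lt_or_eq_of_le hc2 with h' | h'
      · exact h'
      · exfalso; nlinarith
    refine ⟨2*π - Real.arccos c, ⟨?_, ?_⟩, ?_, ?_⟩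
    · nlinarith [Real.arccos_le_pi c, Real.pi_pos]
    · have := (Real.arccos_pos).mpr hclt
      linarith
    · rw [Real.cos_two_pi_sub, Real.cos_arccos hc1 hc2]
    · rw [Real.sin_two_pi_sub, Real.sin_arccos, hs2, Real.sqrt_sq_eq_abs, abs_of_neg hs]
      ring

lemma theta_inj {a b : ℝ} (ha : a ∈ Set.Ico 0 (2*π)) (hb : b ∈ Set.Ico 0 (2*π))
    (hc : Real.cos a = Real.cos b) (hs : Real.sin a = Real.sin b) : a = b := by
  have h1 : Real.cos (a - b) = 1 := by
    rw [Real.cos_sub, hc, hs]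
    nlinarith [Real.sin_sq_add_cos_sq b]
  have h2 : a - b = 0 := by
    rw [← Real.cos_eq_one_iff_of_lt_of_lt (by cases ha; cases hb; linarith)
      (by cases ha; cases hb; linarith)]
    exact h1
  linarith

section ExpHat

attribute [local instance] Matrix.linftyOpNormedAddCommGroup Matrix.linftyOpNormedRing
  Matrix.linftyOpNormedAlgebra

lemma exp_rodrigues (K : Matrix (Fin 3) (Fin 3) ℝ) (hK3 : K * K * K = -K) (θ : ℝ) :
    NormedSpace.exp (θ • K) = 1 + Real.sin θ • K + (1 - Real.cos θ) • (K * K) := by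
  set F : ℝ → Matrix (Fin 3) (Fin 3) ℝ :=
    fun t => 1 + Real.sin t • K + (1 - Real.cos t) • (K * K) with hF
  have hFK : ∀ t, F t * K = Real.cos t • K + Real.sin t • (K * K) := by
    intro t
    simp only [hF]
    rw [add_mul, add_mul, one_mul, smul_mul_assoc, smul_mul_assoc, hK3, smul_neg]
    module
  have hFderiv : ∀ t, HasDerivAt F (Real.cos t • K + Real.sin t • (K * K)) t := by
    intro t
    have h1 : HasDerivAt (fun t : ℝ => Real.sin t • K) (Real.cos t • K) t :=
      (Real.hasDerivAt_sin t).smul_const K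
    have h2 : HasDerivAt (fun t : ℝ => (1 - Real.cos t) • (K * K)) (Real.sin t • (K * K)) t := by
      have : HasDerivAt (fun t : ℝ => 1 - Real.cos t) (Real.sin t) t := by
        have h := (hasDerivAt_const t (1:ℝ)).sub (Real.hasDerivAt_cos t)
        rw [zero_sub, neg_neg] at h
        exact h
      exact this.smul_const (K * K)
    have h := ((hasDerivAt_const t (1 : Matrix (Fin 3) (Fin 3) ℝ)).add h1).add h2
    rw [zero_add] at h
    exact h
  set g : ℝ → Matrix (Fin 3) (Fin 3) ℝ := fun u => NormedSpace.exp (u • (-K)) with hgdef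
  have hg : ∀ t : ℝ, HasDerivAt g (g t * (-K)) t := fun t => hasDerivAt_exp_smul_const (-K) t
  have hH : ∀ t : ℝ, HasDerivAt (fun u => F u * g u) 0 t := by
    intro t
    have hcomm : Commute K (g t) := ((Commute.refl K).neg_right.smul_right t).exp_right
    have hz : (Real.cos t • K + Real.sin t • (K * K)) * g t + F t * (g t * -K) = 0 := by
      rw [mul_neg, ← hcomm.eq, ← mul_neg, ← mul_assoc, hFK t]
      rw [mul_neg, add_neg_cancel]
    have := (hFderiv t).mul (hg t)
    rw [hz] at this
    exact this
  have hconst : F θ * g θ = F 0 * g 0 :=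
    is_const_of_deriv_eq_zero (fun x => (hH x).differentiableAt)
      (fun x => (hH x).deriv) θ 0
  have hg0 : g 0 = 1 := by simp [hgdef, NormedSpace.exp_zero]
  have hF0 : F 0 = 1 := by simp [hF]
  have hginv : g θ * NormedSpace.exp (θ • K) = 1 := by
    rw [hgdef]
    beta_reduce
    have hc := NormedSpace.exp_add_of_commute (((Commute.refl K).neg_left.smul_left θ).smul_right θ)
    rw [smul_neg, neg_add_cancel, NormedSpace.exp_zero] at hc
    rw [smul_neg]
    exact hc.symm
  calc NormedSpace.exp (θ • K) = F θ * (g θ * NormedSpace.exp (θ • K)) := by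
        rw [← mul_assoc, hconst, hg0, hF0]; simp
    _ = F θ := by rw [hginv, mul_one]

end ExpHat

lemma so3_fixed (Q : Matrix (Fin 3) (Fin 3) ℝ) (hQ : Qᵀ * Q = 1) (hdet : Q.det = 1)
    (n : Fin 3 → ℝ) (hn : n ⬝ᵥ n = 1) (hQn : Q *ᵥ n = n) :
    ∃! θ : ℝ, θ ∈ Set.Ico 0 (2*π) ∧
      Q = 1 + Real.sin θ • hatMap n + (1 - Real.cos θ) • (hatMap n * hatMap n) := by
  obtain ⟨u, hu, hnu⟩ := exists_perp n hn
  set w := n ⨯₃ u with hw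
  have hun : u ⬝ᵥ n = 0 := by rw [dotProduct_comm]; exact hnu
  have hnw : n ⬝ᵥ w = 0 := dot_self_cross n u
  have huw : u ⬝ᵥ w = 0 := dot_cross_self n u
  have hwn : w ⬝ᵥ n = 0 := by rw [dotProduct_comm]; exact hnw
  have hwu : w ⬝ᵥ u = 0 := by rw [dotProduct_comm]; exact huw
  have hww : w ⬝ᵥ w = 1 := by
    rw [hw, cross_dot_cross, hn, hu, hnu, hun]; ring
  have huwn : u ⨯₃ w = n := by
    rw [hw, cross_cross_eq, hu, hun]; simp
  have hnwu : n ⨯₃ w = -u := by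
    rw [hw, cross_cross_eq, hnu, hn]; simp
  set P : Matrix (Fin 3) (Fin 3) ℝ := Matrix.of ![n, u, w] with hP
  have hPP : P * Pᵀ = 1 := by
    ext i j
    have e : (P * Pᵀ) i j = ![n, u, w] i ⬝ᵥ ![n, u, w] j := by
      simp only [hP, Matrix.mul_apply, Matrix.transpose_apply, Matrix.of_apply,
        dotProduct]
    rw [e]
    fin_cases i <;> fin_cases j <;>
      simp [Matrix.one_apply, hn, hu, hww, hnu, hun, hnw, hwn, huw, hwu]
  have hPTP : Pᵀ * P = 1 := mul_eq_one_comm.mp hPP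
  have hpres : ∀ a b : Fin 3 → ℝ, (Q *ᵥ a) ⬝ᵥ (Q *ᵥ b) = a ⬝ᵥ b := by
    intro a b
    rw [Matrix.dotProduct_mulVec, ← Matrix.mulVec_transpose, Matrix.mulVec_mulVec, hQ,
      Matrix.one_mulVec]
  have hcomp : ∀ v : Fin 3 → ℝ, v = (n ⬝ᵥ v) • n + (u ⬝ᵥ v) • u + (w ⬝ᵥ v) • w := by
    intro v
    have h1 : v = Pᵀ *ᵥ (P *ᵥ v) := by
      rw [Matrix.mulVec_mulVec, hPTP, Matrix.one_mulVec]
    conv_lhs => rw [h1]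
    funext i
    simp [hP, Matrix.mulVec, dotProduct, Fin.sum_univ_three, Matrix.transpose_apply]
    ring
  have hnx : n ⬝ᵥ (Q *ᵥ u) = 0 := by
    have h := hpres n u; rwa [hQn, hnu] at h
  have hny : n ⬝ᵥ (Q *ᵥ w) = 0 := by
    have h := hpres n w; rwa [hQn, hnw] at h
  set c := u ⬝ᵥ (Q *ᵥ u) with hc
  set s := w ⬝ᵥ (Q *ᵥ u) with hs
  set c' := u ⬝ᵥ (Q *ᵥ w) with hc'
  set s' := w ⬝ᵥ (Q *ᵥ w) with hs'
  have hx : Q *ᵥ u = c • u + s • w := by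
    have h := hcomp (Q *ᵥ u)
    rwa [hnx, zero_smul, zero_add] at h
  have hy : Q *ᵥ w = c' • u + s' • w := by
    have h := hcomp (Q *ᵥ w)
    rwa [hny, zero_smul, zero_add] at h
  have hdotexp : ∀ a b a' b' : ℝ,
      (a • u + b • w) ⬝ᵥ (a' • u + b' • w) = a * a' + b * b' := by
    intro a b a' b'
    simp [add_dotProduct, dotProduct_add, smul_dotProduct,
      dotProduct_smul, hu, hww, huw, hwu, smul_eq_mul]
    ring
  have h3 : c^2 + s^2 = 1 := by
    have h := hpres u u
    rw [hx, hu, hdotexp] at h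
    nlinarith [h]
  have h1 : c * c' + s * s' = 0 := by
    have h := hpres u w
    rw [hx, hy, huw, hdotexp] at h
    linarith
  have hdetP : P.det = 1 := by
    have ht := triple_product_eq_det n u w
    rw [huwn, hn] at ht
    exact ht.symm
  have hPQ : P * Qᵀ = (![Q *ᵥ n, Q *ᵥ u, Q *ᵥ w] : Matrix (Fin 3) (Fin 3) ℝ) := by
    ext i j
    rw [Matrix.mul_apply]
    fin_cases i <;>
      simp [hP, Matrix.mulVec, dotProduct, Fin.sum_univ_three, mul_comm]
  have h2 : c * s' - s * c' = 1 := by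
    rw [hQn, hx, hy] at hPQ
    have ht := triple_product_eq_det n (c • u + s • w) (c' • u + s' • w)
    rw [cross_bilin, huwn, dotProduct_smul, hn, smul_eq_mul, mul_one] at ht
    rw [ht, ← hPQ, Matrix.det_mul, Matrix.det_transpose, hdet, hdetP, one_mul]
  have hs'c : s' = c := by linear_combination c*h2 + s*h1 - s'*h3
  have hc's : c' = -s := by linear_combination c*h1 - s*h2 - c'*h3
  obtain ⟨θ, hθmem, hθc, hθs⟩ := exists_cos_sin c s h3
  set K := hatMap n with hK
  have hFv : ∀ t (v : Fin 3 → ℝ),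
      (1 + Real.sin t • K + (1 - Real.cos t) • (K * K)) *ᵥ v
        = v + Real.sin t • (n ⨯₃ v) + (1 - Real.cos t) • (n ⨯₃ (n ⨯₃ v)) := by
    intro t v
    rw [Matrix.add_mulVec, Matrix.add_mulVec, Matrix.one_mulVec,
      Matrix.smul_mulVec, Matrix.smul_mulVec, ← Matrix.mulVec_mulVec,
      hK, hatMap_mulVec, hatMap_mulVec]
  have hFn : ∀ t, (1 + Real.sin t • K + (1 - Real.cos t) • (K * K)) *ᵥ n = n := by
    intro t
    rw [hFv]
    simp [cross_self]
  have hFu : ∀ t, (1 + Real.sin t • K + (1 - Real.cos t) • (K * K)) *ᵥ u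
      = Real.cos t • u + Real.sin t • w := by
    intro t
    rw [hFv, ← hw, hnwu]
    module
  have hFw : ∀ t, (1 + Real.sin t • K + (1 - Real.cos t) • (K * K)) *ᵥ w
      = (- Real.sin t) • u + Real.cos t • w := by
    intro t
    have hneg : n ⨯₃ (-u) = -w := by
      rw [map_neg, ← hw]
    rw [hFv, hnwu, hneg]
    module
  have hmain : ∀ t, (Q = 1 + Real.sin t • K + (1 - Real.cos t) • (K * K)) ↔
      (Real.cos t = c ∧ Real.sin t = s) := by
    intro t
    constructor
    · intro hQF
      have hxu := congrArg (fun M => M *ᵥ u) hQF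
      rw [hFu, hx] at hxu
      have hcu := congrArg (fun v => u ⬝ᵥ v) hxu
      have hcw := congrArg (fun v => w ⬝ᵥ v) hxu
      simp only [dotProduct_add, dotProduct_smul, hu, hww, huw, hwu,
        smul_eq_mul, mul_one, mul_zero, add_zero, zero_add] at hcu hcw
      exact ⟨by linarith [hcu], by linarith [hcw]⟩
    · rintro ⟨hct, hst⟩
      have hrow : ∀ M : Matrix (Fin 3) (Fin 3) ℝ,
          P * Mᵀ = (![M *ᵥ n, M *ᵥ u, M *ᵥ w] : Matrix (Fin 3) (Fin 3) ℝ) := by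
        intro M
        ext i j
        rw [Matrix.mul_apply]
        fin_cases i <;>
          simp [hP, Matrix.mulVec, dotProduct, Fin.sum_univ_three, mul_comm]
      have hPQF : P * Qᵀ = P * (1 + Real.sin t • K + (1 - Real.cos t) • (K * K))ᵀ := by
        rw [hrow, hrow, hQn, hFn, hx, hy, hFu, hFw, hct, hst, hs'c, hc's]
      have hT : Qᵀ = (1 + Real.sin t • K + (1 - Real.cos t) • (K * K))ᵀ := by
        have h := congrArg (fun M => Pᵀ * M) hPQF
        simpa only [← mul_assoc, hPTP, one_mul] using h
      calc Q = Qᵀᵀ := (Matrix.transpose_transpose Q).symm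
        _ = _ := by rw [hT, Matrix.transpose_transpose]
  refine ⟨θ, ⟨hθmem, (hmain θ).mpr ⟨hθc, hθs⟩⟩, ?_⟩
  rintro θ' ⟨hθ'mem, hθ'eq⟩
  obtain ⟨hct', hst'⟩ := (hmain θ').mp hθ'eq
  exact theta_inj hθ'mem hθmem (by rw [hct', hθc]) (by rw [hst', hθs])

/-- Existence of the reconstruction phase: if `R' = R ω̂_B` in `SO(3)` and the body
momentum `Π(t) = R(t)⁻¹ L` (for `L ≠ 0`) satisfies `Π(t₁) = Π(t₂)`, then there is
a unique angle `θ_M` mod `2π` with `R(t₂) = exp(θ_M L̂/‖L‖) R(t₁)`. -/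
theorem stmt18 (R R' : ℝ → Matrix (Fin 3) (Fin 3) ℝ)
    (hSO : ∀ t, (R t)ᵀ * R t = 1 ∧ (R t).det = 1)
    (hR' : ∀ t i j, HasDerivAt (fun s => R s i j) (R' t i j) t)
    (ω : ℝ → Fin 3 → ℝ) (hωcont : Continuous ω)
    (hω : ∀ t (v : Fin 3 → ℝ), ((R t)ᵀ * R' t) *ᵥ v = crossProduct (ω t) v)
    (L : Fin 3 → ℝ) (hL : L ≠ 0) (t₁ t₂ : ℝ)
    (hclosed : (R t₁)ᵀ *ᵥ L = (R t₂)ᵀ *ᵥ L) :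
    ∃! θM : ℝ, θM ∈ Set.Ico (0 : ℝ) (2 * π) ∧
      R t₂ = NormedSpace.exp ((θM / Real.sqrt (L ⬝ᵥ L)) • hatMap L) * R t₁ := by
  have h1 := (hSO t₁).1
  have h2 := (hSO t₂).1
  have h1' : R t₁ * (R t₁)ᵀ = 1 := mul_eq_one_comm.mp h1
  have h2' : R t₂ * (R t₂)ᵀ = 1 := mul_eq_one_comm.mp h2
  set Q := R t₂ * (R t₁)ᵀ with hQdef
  have hQorth : Qᵀ * Q = 1 := by
    rw [hQdef, Matrix.transpose_mul, Matrix.transpose_transpose]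
    rw [mul_assoc, ← mul_assoc ((R t₂)ᵀ), h2, one_mul, h1']
  have hQdet : Q.det = 1 := by
    rw [hQdef, Matrix.det_mul, Matrix.det_transpose, (hSO t₂).2, (hSO t₁).2, mul_one]
  have hQL : Q *ᵥ L = L := by
    rw [hQdef, ← Matrix.mulVec_mulVec, hclosed, Matrix.mulVec_mulVec, h2', Matrix.one_mulVec]
  have hLL : 0 < L ⬝ᵥ L := by
    have ha : L ⬝ᵥ L ≠ 0 := fun h => hL (dotProduct_self_eq_zero.mp h)
    have hb : 0 ≤ L ⬝ᵥ L := Finset.sum_nonneg fun i _ => mul_self_nonneg _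
    exact lt_of_le_of_ne hb (Ne.symm ha)
  set r := Real.sqrt (L ⬝ᵥ L) with hr
  have hrpos : 0 < r := Real.sqrt_pos.mpr hLL
  have hrne : r ≠ 0 := ne_of_gt hrpos
  have hrr : r * r = L ⬝ᵥ L := Real.mul_self_sqrt hLL.le
  set n := r⁻¹ • L with hndef
  have hn : n ⬝ᵥ n = 1 := by
    rw [hndef, smul_dotProduct, dotProduct_smul, smul_eq_mul, smul_eq_mul, ← hrr]
    field_simp
  have hQn : Q *ᵥ n = n := by rw [hndef, Matrix.mulVec_smul, hQL]
  have hK3 : hatMap n * hatMap n * hatMap n = -(hatMap n) := by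
    rw [hatMap_cube, hn, one_smul]
  have hsmul : ∀ θ : ℝ, (θ / r) • hatMap L = θ • hatMap n := by
    intro θ
    rw [hndef, hatMap_smul, smul_smul, div_eq_mul_inv]
  have hiff : ∀ θ : ℝ,
      (R t₂ = NormedSpace.exp ((θ / Real.sqrt (L ⬝ᵥ L)) • hatMap L) * R t₁) ↔
      (Q = 1 + Real.sin θ • hatMap n + (1 - Real.cos θ) • (hatMap n * hatMap n)) := by
    intro θ
    have hexp : NormedSpace.exp (θ • hatMap n)
        = 1 + Real.sin θ • hatMap n + (1 - Real.cos θ) • (hatMap n * hatMap n) :=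
      exp_rodrigues (hatMap n) hK3 θ
    rw [← hr, hsmul θ, hexp]
    constructor
    · intro h
      rw [hQdef, h, mul_assoc, h1', mul_one]
    · intro h
      calc R t₂ = R t₂ * ((R t₁)ᵀ * R t₁) := by rw [h1, mul_one]
        _ = Q * R t₁ := by rw [hQdef, mul_assoc]
        _ = _ := by rw [h]
  obtain ⟨θ, ⟨hmem, heq⟩, huniq⟩ := so3_fixed Q hQorth hQdet n hn hQn
  refine ⟨θ, ⟨hmem, (hiff θ).mpr heq⟩, ?_⟩
  rintro θ' ⟨hmem', heq'⟩
  exact huniq θ' ⟨hmem', (hiff θ').mp heq'⟩
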